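/- Let f(x) = f_0 + f_1x^{p^s} + f_2x^{2p^s} + ⋯ + f_nx^{np^s} ∈ R^t[x] with f_i = f_{i,0} + uf_{i,1} + ⋯ + u^{t−1}f_{i,t−1}, f_{i,j} ∈ F, and for each i let f̃_{i,0} be the unique element of F with f̃_{i,0}^{p^s} = f_{i,0}. If the polynomial f̃_{0,0} + f̃_{1,0}x + ⋯ + f̃_{n,0}x^n ∈ F[x] is an irreducible polynomial of degree n, then the image of every nonzero polynomial g ∈ F[x] of degree less than n is invertible in the quotient ring R^t[x]/⟨f(x)⟩. -/

import Mathlib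

open Polynomial

/-- The finite chain ring `R^t = 𝔽_{p^m}[u]/⟨u^t⟩`. -/
abbrev Rt (p m t : ℕ) [Fact p.Prime] : Type _ :=
  Polynomial (GaloisField p m) ⧸ Ideal.span {(X : Polynomial (GaloisField p m)) ^ t}

noncomputable instance (p m t : ℕ) [Fact p.Prime] : CommRing (Rt p m t) := Ideal.Quotient.commRing _

/-- The canonical projection `𝔽_{p^m}[u] → R^t`. -/
noncomputable def mkRt (p m t : ℕ) [Fact p.Prime] :
    Polynomial (GaloisField p m) →+* Rt p m t :=
  Ideal.Quotient.mk _

/-- The canonical embedding `𝔽_{p^m} → R^t`. -/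
noncomputable def κ (p m t : ℕ) [Fact p.Prime] : GaloisField p m →+* Rt p m t :=
  (mkRt p m t).comp (C : GaloisField p m →+* Polynomial (GaloisField p m))

/-!
Write `F̃ = ∑ f̃_{i,0} xⁱ`. Since `F̃` is irreducible of degree `n > deg g`, `g` is coprime to `F̃`,
hence to `F̃^{p^s}`, and in characteristic `p` the Frobenius gives `F̃^{p^s} = ∑ f_{i,0} x^{i p^s}`.
This polynomial differs from `f` by a multiple of `u`, which is nilpotent in `R^t`; so in
`R^t[x]/⟨f⟩` a Bézout identity `a g + b F̃^{p^s} = 1` reads `a g = 1 - (nilpotent)`, a unit.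
-/

theorem IsCoprime.isUnit_of_isNilpotent {R : Type*} [CommRing R] {x y : R}
    (h : IsCoprime x y) (hy : IsNilpotent y) : IsUnit x := by
  obtain ⟨a, b, hab⟩ := h
  have hax : a * x = 1 - b * y := by rw [← hab]; ring
  have hby : IsNilpotent (b * y) := (Commute.all b y).isNilpotent_mul_left hy
  exact isUnit_of_mul_isUnit_right (hax ▸ hby.isUnit_one_sub)

theorem Ideal.Quotient.isUnit_mk_span_singleton_of_isCoprime {R : Type*} [CommRing R]
    {f x y : R} (h : IsCoprime x y) (hfy : IsNilpotent (f - y)) :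
    IsUnit (Ideal.Quotient.mk (Ideal.span {f}) x) := by
  refine (h.map _).isUnit_of_isNilpotent ?_
  have hf : Ideal.Quotient.mk (Ideal.span {f}) f = 0 :=
    Ideal.Quotient.eq_zero_iff_mem.2 (Ideal.mem_span_singleton_self f)
  simpa [hf] using hfy.neg.map (Ideal.Quotient.mk (Ideal.span {f}))

namespace Polynomial

theorem sum_C_mul_X_pow_pow_char_pow {R : Type*} [CommSemiring R] (p : ℕ) [ExpChar R p]
    (k : ℕ) (s : Finset ℕ) (a : ℕ → R) :
    (∑ i ∈ s, C (a i) * X ^ i) ^ p ^ k = ∑ i ∈ s, C (a i ^ p ^ k) * X ^ (i * p ^ k) := by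
  rw [sum_pow_char_pow]
  simp only [mul_pow, C_pow, pow_mul]

theorem isNilpotent_sum_C_mul_X_pow_sub {R ι : Type*} [CommRing R] {s : Finset ι}
    {a b : ι → R} (e : ι → ℕ) (h : ∀ i ∈ s, IsNilpotent (a i - b i)) :
    IsNilpotent (∑ i ∈ s, C (a i) * X ^ e i - ∑ i ∈ s, C (b i) * X ^ e i) := by
  rw [← Finset.sum_sub_distrib, ← mem_nilradical]
  refine Ideal.sum_mem _ fun i hi ↦ mem_nilradical.2 ?_
  rw [← sub_mul, ← C_sub]
  exact (Commute.all _ _).isNilpotent_mul_right ((h i hi).map C)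

theorem isNilpotent_mk_sub_mk_C_coeff_zero {K : Type*} [CommRing K] (t : ℕ) (q : K[X]) :
    IsNilpotent (Ideal.Quotient.mk (Ideal.span {X ^ t}) q -
      Ideal.Quotient.mk (Ideal.span {X ^ t}) (C (q.coeff 0))) := by
  obtain ⟨r, hr⟩ := X_dvd_sub_C (p := q)
  have hu : Ideal.Quotient.mk (Ideal.span {(X : K[X]) ^ t}) X ^ t = 0 := by
    rw [← map_pow, Ideal.Quotient.eq_zero_iff_mem]
    exact Ideal.mem_span_singleton_self _
  rw [← map_sub, hr, map_mul]
  exact (Commute.all _ _).isNilpotent_mul_right ⟨t, hu⟩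

theorem coeff_zero_sum_C_mul_X_pow {R : Type*} [Semiring R] {t : ℕ} (ht : 1 ≤ t) (c : ℕ → R) :
    (∑ j ∈ Finset.range t, C (c j) * X ^ j).coeff 0 = c 0 := by
  simp [finsetSum_coeff, Nat.one_le_iff_ne_zero.mp ht]

end Polynomial

theorem stmt_2 (p m s t n : ℕ) [Fact p.Prime] (ht : 1 ≤ t)
    (fc : ℕ → ℕ → GaloisField p m) (ftil : ℕ → GaloisField p m)
    (hftil : ∀ i, ftil i ^ p ^ s = fc i 0)
    (hirr : Irreducible (∑ i ∈ Finset.range (n + 1), C (ftil i) * X ^ i))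
    (hdeg : (∑ i ∈ Finset.range (n + 1), C (ftil i) * X ^ i).natDegree = n) :
    ∀ g : Polynomial (GaloisField p m), g ≠ 0 → g.degree < (n : ℕ) →
      IsUnit (Ideal.Quotient.mk
        (Ideal.span {(∑ i ∈ Finset.range (n + 1),
          C (mkRt p m t (∑ j ∈ Finset.range t, C (fc i j) * X ^ j)) * X ^ (i * p ^ s) :
            Polynomial (Rt p m t))})
        (g.map (κ p m t))) := by
  intro g hg hgdeg
  set F := ∑ i ∈ Finset.range (n + 1), C (ftil i) * X ^ i
  have hcop : IsCoprime g (F ^ p ^ s) := by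
    refine (hirr.coprime_iff_not_dvd.2 (not_dvd_of_degree_lt hg ?_)).symm.pow_right
    rwa [degree_eq_natDegree hirr.ne_zero, hdeg]
  have hfrob : (F ^ p ^ s).map (κ p m t) =
      ∑ i ∈ Finset.range (n + 1), C (κ p m t (fc i 0)) * X ^ (i * p ^ s) := by
    rw [sum_C_mul_X_pow_pow_char_pow p, Polynomial.map_sum]
    refine Finset.sum_congr rfl fun i _ ↦ ?_
    rw [Polynomial.map_mul, map_C, Polynomial.map_pow, map_X, hftil]
  refine Ideal.Quotient.isUnit_mk_span_singleton_of_isCoprime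
    (hcop.map (mapRingHom (κ p m t))) ?_
  rw [coe_mapRingHom, hfrob]
  refine isNilpotent_sum_C_mul_X_pow_sub _ fun i _ ↦ ?_
  have hred := isNilpotent_mk_sub_mk_C_coeff_zero t (∑ j ∈ Finset.range t, C (fc i j) * X ^ j)
  rwa [coeff_zero_sum_C_mul_X_pow ht] at hred
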